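/- Let n ≥ 2 and let p : Fin n → ℝ satisfy 1/2 ≤ p i ≤ 1 for all i and be sorted in decreasing order (i ≤ j → p i ≥ p j). Suppose λ is in the standard simplex, two indices w ≠ w' satisfy λ w * p w > λ w' * p w' with λ w' > 0, λ w * p w = max_i (λ i * p i), and p w' > p w. Then λ does not maximize U over the simplex, where U(λ) = (∑ i, λ i * p i) − max_i (λ i * p i): there exists λ' in the simplex with U(λ') > U(λ). -/

import Mathlib

/-!
Move a small mass `ε` from the attacked worker `w` to the more proficient worker `w'`. The
expected payoff `∑ i, λ i * p i` grows by `ε * (p w' - p w) > 0`. The attacked product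
`λ w * p w` does not grow, and since `λ w' * p w'` lies strictly below the maximum, it stays below
it for `ε` small enough; so the maximum does not grow, and the utility strictly increases.
-/

open Finset

/-- The attacker best-responds by attacking a worker maximizing `lam i * p i`. -/
noncomputable def defenderUtility {ι : Type*} [Fintype ι] (p lam : ι → ℝ) : ℝ :=
  (∑ i, lam i * p i) - ⨆ i, lam i * p i

def transferMass {ι : Type*} [DecidableEq ι] (lam : ι → ℝ) (a b : ι) (ε : ℝ) : ι → ℝ :=
  lam - Pi.single a ε + Pi.single b ε

section TransferMass

variable {ι : Type*} [DecidableEq ι] {lam p : ι → ℝ} {a b : ι} {ε : ℝ}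

lemma transferMass_nonneg (h0 : ∀ i, 0 ≤ lam i) (hε : 0 ≤ ε) (hεa : ε ≤ lam a) (i : ι) :
    0 ≤ transferMass lam a b ε i := by
  simp only [transferMass, Pi.add_apply, Pi.sub_apply, Pi.single_apply]
  have := h0 i
  split_ifs <;> subst_vars <;> linarith

variable [Fintype ι]

lemma sum_transferMass : ∑ i, transferMass lam a b ε i = ∑ i, lam i := by
  simp [transferMass, sum_add_distrib, sum_sub_distrib, sum_pi_single']

lemma sum_transferMass_mul :
    ∑ i, transferMass lam a b ε i * p i = ∑ i, lam i * p i + ε * (p b - p a) := by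
  simp only [transferMass, Pi.add_apply, Pi.sub_apply, add_mul, sub_mul, sum_add_distrib,
    sum_sub_distrib, Pi.single_apply, ite_mul, zero_mul, sum_ite_eq', mem_univ, if_true]
  ring

lemma iSup_transferMass_mul_le (hab : a ≠ b) (hε : 0 ≤ ε) (hpa : 0 ≤ p a)
    (hb : (lam b + ε) * p b ≤ ⨆ i, lam i * p i) :
    ⨆ i, transferMass lam a b ε i * p i ≤ ⨆ i, lam i * p i := by
  have : Nonempty ι := ⟨a⟩
  refine ciSup_le fun i => ?_
  have hle : lam i * p i ≤ ⨆ i, lam i * p i :=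
    le_ciSup (f := fun i => lam i * p i) (Finite.bddAbove_range _) i
  simp only [transferMass, Pi.add_apply, Pi.sub_apply, Pi.single_apply]
  split_ifs with hia hib hib
  · exact absurd (hia ▸ hib) hab
  · subst hia; nlinarith
  · subst hib; simpa using hb
  · simpa using hle

end TransferMass

theorem exists_defenderUtility_lt_of_lt_proficiency {ι : Type*} [Fintype ι] [DecidableEq ι]
    {p lam : ι → ℝ} (h0 : ∀ i, 0 ≤ lam i) {a b : ι} (hpa : 0 ≤ p a) (hpab : p a < p b)
    (hlt : lam b * p b < lam a * p a) (hmax : lam a * p a = ⨆ i, lam i * p i) :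
    ∃ l : ι → ℝ, (∀ i, 0 ≤ l i) ∧ ∑ i, l i = ∑ i, lam i ∧
      defenderUtility p lam < defenderUtility p l := by
  have hab : a ≠ b := by rintro rfl; exact hlt.false
  have hpb : 0 < p b := hpa.trans_lt hpab
  have hla : 0 < lam a :=
    pos_of_mul_pos_left ((mul_nonneg (h0 b) hpb.le).trans_lt hlt) hpa
  set ε := min (lam a) ((lam a * p a - lam b * p b) / p b)
  have hε : 0 < ε := lt_min hla (div_pos (sub_pos.2 hlt) hpb)
  have hεb : ε * p b ≤ lam a * p a - lam b * p b := (le_div_iff₀ hpb).1 (min_le_right _ _)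
  have hsup := iSup_transferMass_mul_le hab hε.le hpa (p := p) (by rw [← hmax]; linarith)
  refine ⟨transferMass lam a b ε, transferMass_nonneg h0 hε.le (min_le_left _ _),
    sum_transferMass, ?_⟩
  rw [defenderUtility, defenderUtility, sum_transferMass_mul]
  linarith [mul_pos hε (sub_pos.2 hpab)]

theorem stmt_14_general (n : ℕ)
    (p : Fin n → ℝ) (hp : ∀ i, 1 / 2 ≤ p i ∧ p i ≤ 1)
    (lam : Fin n → ℝ) (h0 : ∀ i, 0 ≤ lam i) (h1 : ∑ i, lam i = 1)
    (w w' : Fin n)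
    (hgt : lam w' * p w' < lam w * p w)
    (hmax : lam w * p w = ⨆ i, lam i * p i)
    (hpw : p w < p w') :
    ∃ l' : Fin n → ℝ, (∀ i, 0 ≤ l' i) ∧ (∑ i, l' i = 1) ∧
      ((∑ i, lam i * p i) - ⨆ i, lam i * p i)
        < ((∑ i, l' i * p i) - ⨆ i, l' i * p i) := by
  obtain ⟨l, hl0, hl1, hlt⟩ := exists_defenderUtility_lt_of_lt_proficiency h0
    (by linarith [(hp w).1]) hpw hgt hmax
  exact ⟨l, hl0, hl1.trans h1, hlt⟩

/-- First case of the proof of Proposition 4. If in the simplex point `lam`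
worker `w` attains the maximum of `lam i * p i`, while `w' ≠ w` has a strictly smaller
product, `lam w' > 0`, and is strictly more proficient (`p w' > p w`), then `lam` is not
optimal: some simplex point achieves strictly larger defender utility. -/
theorem stmt_14 (n : ℕ) (hn : 2 ≤ n)
    (p : Fin n → ℝ) (hp : ∀ i, 1 / 2 ≤ p i ∧ p i ≤ 1)
    (hsort : ∀ i j : Fin n, i ≤ j → p j ≤ p i)
    (lam : Fin n → ℝ) (h0 : ∀ i, 0 ≤ lam i) (h1 : ∑ i, lam i = 1)
    (w w' : Fin n) (hww' : w ≠ w')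
    (hgt : lam w' * p w' < lam w * p w) (hw'pos : 0 < lam w')
    (hmax : lam w * p w = ⨆ i, lam i * p i)
    (hpw : p w < p w') :
    ∃ l' : Fin n → ℝ, (∀ i, 0 ≤ l' i) ∧ (∑ i, l' i = 1) ∧
      ((∑ i, lam i * p i) - ⨆ i, lam i * p i)
        < ((∑ i, l' i * p i) - ⨆ i, l' i * p i) :=
  stmt_14_general n p hp lam h0 h1 w w' hgt hmax hpw
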